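/- Assume Hypothesis (H) and additionally that Q = (Q*)^2. Let δ' in k[x] be the determinant of the Hermite matrix H((Q*)^2) associated with (Q*)^2 (note ((Q*)^2)^- = Q*). Then δ' is nonzero with deg_x(δ') ≤ μ' = 2·d_x*·d_y*, and there exist polynomials B, b in k[x,y] with deg_y(B) < d_y* and deg_y(b) < d_y* such that P/(Q*)^2 = D_y(B/(δ'·Q*)) + b/(δ'·Q*), and moreover deg_x(B) ≤ μ' − d_x* + deg_x(P) and deg_x(b) ≤ μ' − d_x* + deg_x(P). -/

import Mathlib

/-!
For `Q = (Q*)²` one has `Q⁻ = Q*`, and clearing denominators turns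
`P/(Q*)² = D_y(B/(δ'·Q*)) + b/(δ'·Q*)` into the Hermite system
`Q*·B' − (Q*)'·B + Q*·b = δ'·P`. The Hermite matrix is nonsingular: a kernel vector `(A, a)`
gives `Q* ∣ (Q*)'·A` with `deg_y A < d_y*`, and a squarefree primitive `Q*` is coprime to `(Q*)'`
in characteristic zero, so `A = 0` and then `a = 0`. Cramer's rule solves the system with
right-hand side `δ'·P` over `k[x]`, and since every entry of the Hermite matrix has `x`-degree at
most `d_x*`, expanding the determinants bounds the `x`-degrees of `δ'`, `B` and `b`.
-/

open Polynomial

noncomputable section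

/-- A map is a derivation: it is additive and satisfies the Leibniz rule. -/
def IsDeriv {F : Type*} [CommRing F] (D : F → F) : Prop :=
  (∀ a b, D (a + b) = D a + D b) ∧ ∀ a b, D (a * b) = a * D b + b * D a

/-- Degree in `x` of an element of `k[x][y]` (inner variable `x`, outer variable `y`). -/
def degX {k : Type*} [Field k] (Q : Polynomial (Polynomial k)) : ℕ :=
  Q.support.sup fun i => (Q.coeff i).natDegree

/-- Partial derivative with respect to `x` on `k[x][y]`. -/
def derivX {k : Type*} [Field k] (Q : Polynomial (Polynomial k)) : Polynomial (Polynomial k) :=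
  Q.sum fun i a => Polynomial.C (Polynomial.derivative a) * Polynomial.X ^ i

/-- The embedding `k[x][y] → k(x)(y)`. -/
def toF {k : Type*} [Field k] : Polynomial (Polynomial k) →+* RatFunc (RatFunc k) :=
  (algebraMap (Polynomial (RatFunc k)) (RatFunc (RatFunc k))).comp
    (Polynomial.mapRingHom (algebraMap (Polynomial k) (RatFunc k)))

/-- The embedding `k(x) → k(x)(y)`. -/
def ratToF {k : Type*} [Field k] : RatFunc k →+* RatFunc (RatFunc k) :=
  (algebraMap (Polynomial (RatFunc k)) (RatFunc (RatFunc k))).comp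
    (Polynomial.C : RatFunc k →+* Polynomial (RatFunc k))

/-- The embedding `k(x)[y] → k(x)(y)`. -/
def kyToF {k : Type*} [Field k] : Polynomial (RatFunc k) →+* RatFunc (RatFunc k) :=
  algebraMap (Polynomial (RatFunc k)) (RatFunc (RatFunc k))

/-- The embedding `k[x][y] → k(x)[y]`. -/
def toKy {k : Type*} [Field k] : Polynomial (Polynomial k) →+* Polynomial (RatFunc k) :=
  Polynomial.mapRingHom (algebraMap (Polynomial k) (RatFunc k))

/-- The embedding `k[y] → k[x][y]` (a polynomial in `y` viewed in `k[x][y]`). -/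
def yToXY {k : Type*} [Field k] : Polynomial k →+* Polynomial (Polynomial k) :=
  Polynomial.mapRingHom (Polynomial.C : k →+* Polynomial k)

/-- The Hermite matrix associated with a factorisation `Q = Qs * Qneg`, with respect to the
monomial bases: its columns are the coefficient vectors (in `y`, coefficients in `k[x]`) of
`Qs * D_y(y^j) - E * y^j` for `j < dm` (where `E = Qs * D_y(Qneg) / Qneg`) and of
`Qneg * y^j` for `j < dy - dm`. -/
def hermiteMat {k : Type*} [Field k] (Qs Qneg E : Polynomial (Polynomial k)) (dy dm : ℕ) :
    Matrix (Fin dy) (Fin dy) (Polynomial k) :=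
  Matrix.of fun i j =>
    if (j : ℕ) < dm then
      (Qs * Polynomial.derivative (Polynomial.X ^ (j : ℕ)) - E * Polynomial.X ^ (j : ℕ)).coeff i
    else
      (Qneg * Polynomial.X ^ ((j : ℕ) - dm)).coeff i


section Determinants

variable {R : Type*} [CommRing R] {ι : Type*} [Fintype ι] [DecidableEq ι]

theorem Matrix.natDegree_det_le_sum (M : Matrix ι ι R[X]) (c : ι → ℕ)
    (h : ∀ i j, (M i j).natDegree ≤ c j) : M.det.natDegree ≤ ∑ j, c j := by
  rw [Matrix.det_apply']
  refine natDegree_sum_le_of_forall_le _ _ fun σ _ => natDegree_mul_le.trans ?_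
  rw [natDegree_intCast, zero_add]
  exact (natDegree_prod_le _ _).trans (Finset.sum_le_sum fun j _ => h (σ j) j)

theorem Matrix.natDegree_cramer_le (M : Matrix ι ι R[X]) (b : ι → R[X]) {c d : ℕ}
    (hM : ∀ i j, (M i j).natDegree ≤ d) (hb : ∀ i, (b i).natDegree ≤ c) (j : ι) :
    (M.cramer b j).natDegree ≤ (Fintype.card ι - 1) * d + c := by
  rw [Matrix.cramer_apply]
  refine (Matrix.natDegree_det_le_sum _ (fun j' => if j' = j then c else d) ?_).trans_eq ?_
  · intro i j'
    by_cases h : j' = j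
    · simpa [Matrix.updateCol_apply, h] using hb i
    · simpa [Matrix.updateCol_apply, h] using hM i j'
  · simp [Finset.sum_ite, Finset.filter_eq', Finset.filter_ne', Finset.card_erase_of_mem, add_comm]

end Determinants

theorem Polynomial.IsPrimitive.isRelPrime_derivative {R : Type*} [CommRing R] [IsDomain R]
    [UniqueFactorizationMonoid R] [CharZero R] {p : R[X]} (hprim : p.IsPrimitive)
    (hsf : Squarefree p) : IsRelPrime p (derivative p) := by
  rw [UniqueFactorizationMonoid.isRelPrime_iff_no_prime_factors hsf.ne_zero]
  rintro d ⟨e, rfl⟩ hd' hprime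
  rw [derivative_mul] at hd'
  have hnd : ¬ d ∣ e := fun h => hprime.not_isUnit (hsf d (mul_dvd_mul_left d h))
  have hdd : d ∣ derivative d :=
    (hprime.dvd_or_dvd ((dvd_add_left (dvd_mul_right d _)).mp hd')).resolve_right hnd
  -- a polynomial dividing its own derivative is constant, hence a unit by primitivity
  have hd0 : derivative d = 0 := by
    by_contra h
    exact (natDegree_derivative_lt (derivative_ne_zero.mp h)).not_ge (natDegree_le_of_dvd hdd h)
  have hdC := eq_C_of_derivative_eq_zero hd0
  rw [hdC] at hprime
  exact hprime.not_isUnit ((hprim _ (Dvd.intro e (by rw [← hdC]))).map C)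

theorem IsDeriv.map_div {F : Type*} [Field F] {D : F → F} (hD : IsDeriv D) (u : F) {v : F}
    (hv : v ≠ 0) : D (u / v) = (D u * v - u * D v) / v ^ 2 := by
  have h := hD.2 (u / v) v
  rw [div_mul_cancel₀ u hv] at h
  rw [h]
  field_simp
  ring

theorem IsDeriv.div_sq_eq_map_div_add_div {F : Type*} [Field F] {D : F → F} (hD : IsDeriv D)
    {c q p B b : F} (hc : c ≠ 0) (hq : q ≠ 0) (hDc : D c = 0)
    (h : q * D B - D q * B + q * b = c * p) :
    p / q ^ 2 = D (B / (c * q)) + b / (c * q) := by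
  rw [hD.map_div B (mul_ne_zero hc hq), hD.2, hDc, mul_zero, add_zero]
  field_simp
  linear_combination -h

section Bivariate

variable {k : Type*} [Field k]

theorem natDegree_coeff_le_degX (R : k[X][X]) (i : ℕ) : (R.coeff i).natDegree ≤ degX R := by
  by_cases h : i ∈ R.support
  · exact Finset.le_sup (f := fun i => (R.coeff i).natDegree) h
  · simp [notMem_support_iff.mp h]

theorem degX_le_of_forall_natDegree_coeff_le {R : k[X][X]} {c : ℕ}
    (h : ∀ i, (R.coeff i).natDegree ≤ c) : degX R ≤ c :=
  Finset.sup_le fun i _ => h i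

theorem natDegree_coeff_derivative_le_degX (R : k[X][X]) (i : ℕ) :
    ((derivative R).coeff i).natDegree ≤ degX R := by
  rw [coeff_derivative, show ((i : k[X]) + 1) = C ((i : k) + 1) by simp]
  exact (natDegree_mul_C_le _ _).trans (natDegree_coeff_le_degX R _)

theorem toF_injective : Function.Injective (toF (k := k)) :=
  (IsFractionRing.injective (Polynomial (RatFunc k)) (RatFunc (RatFunc k))).comp
    (map_injective _ (IsFractionRing.injective (Polynomial k) (RatFunc k)))

theorem apply_toF_eq_toF_derivative {Dy : RatFunc (RatFunc k) → RatFunc (RatFunc k)}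
    (hDy : ∀ A : Polynomial (RatFunc k), Dy (kyToF A) = kyToF (derivative A)) (R : k[X][X]) :
    Dy (toF R) = toF (derivative R) := by
  change Dy (kyToF (R.map _)) = kyToF ((derivative R).map _)
  rw [hDy, derivative_map]

end Bivariate

section CoeffVectors

variable {R : Type*} [Semiring R] {N : ℕ}

/- A vector `v : Fin N → R` in the monomial bases of a Hermite matrix encodes the pair `(A, a)`:
`A = ofVecLow n v` has coefficients `v 0, …, v (n-1)` and `a = ofVecHigh n v` has coefficients
`v n, …, v (N-1)`. -/
def ofVecLow (n : ℕ) (v : Fin N → R) : R[X] :=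
  ∑ j : Fin N, if (j : ℕ) < n then C (v j) * X ^ (j : ℕ) else 0

def ofVecHigh (n : ℕ) (v : Fin N → R) : R[X] :=
  ∑ j : Fin N, if (j : ℕ) < n then 0 else C (v j) * X ^ ((j : ℕ) - n)

theorem coeff_ofVecLow (n : ℕ) (v : Fin N → R) {j : Fin N} (hj : (j : ℕ) < n) :
    (ofVecLow n v).coeff j = v j := by
  rw [ofVecLow, finsetSum_coeff, Finset.sum_eq_single j]
  · simp [hj]
  · intro j' _ hne
    split_ifs
    · rw [coeff_C_mul_X_pow, if_neg (fun h => hne (Fin.ext h.symm))]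
    · rfl
  · simp

theorem coeff_ofVecHigh (n : ℕ) (v : Fin N → R) {j : Fin N} (hj : n ≤ (j : ℕ)) :
    (ofVecHigh n v).coeff (j - n) = v j := by
  rw [ofVecHigh, finsetSum_coeff, Finset.sum_eq_single j]
  · rw [if_neg (not_lt.mpr hj), coeff_C_mul_X_pow, if_pos rfl]
  · intro j' _ hne
    split_ifs
    · rfl
    · rw [coeff_C_mul_X_pow, if_neg (fun h => hne (Fin.ext (by omega)))]
  · simp

theorem eq_zero_of_ofVecLow_eq_zero_of_ofVecHigh_eq_zero {n : ℕ} {v : Fin N → R}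
    (hlow : ofVecLow n v = 0) (hhigh : ofVecHigh n v = 0) : v = 0 := by
  funext j
  by_cases hj : (j : ℕ) < n
  · simpa [hlow] using (coeff_ofVecLow n v hj).symm
  · simpa [hhigh] using (coeff_ofVecHigh n v (not_lt.mp hj)).symm

theorem natDegree_ofVecLow_lt {n : ℕ} (hn : 0 < n) (v : Fin N → R) :
    (ofVecLow n v).natDegree < n := by
  refine Nat.lt_of_le_sub_one hn (natDegree_sum_le_of_forall_le _ _ fun j _ => ?_)
  split_ifs with h
  · exact (natDegree_C_mul_X_pow_le _ _).trans (by omega)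
  · simp

theorem natDegree_ofVecHigh_lt {n : ℕ} (hn : 0 < n) (hN : N ≤ 2 * n) (v : Fin N → R) :
    (ofVecHigh n v).natDegree < n := by
  refine Nat.lt_of_le_sub_one hn (natDegree_sum_le_of_forall_le _ _ fun j _ => ?_)
  split_ifs with h
  · simp
  · exact (natDegree_C_mul_X_pow_le _ _).trans (by omega)

end CoeffVectors

section DegXOfVec

variable {k : Type*} [Field k] {N : ℕ}

theorem degX_ofVecLow_le (n : ℕ) {c : ℕ} {v : Fin N → k[X]} (hv : ∀ j, (v j).natDegree ≤ c) :
    degX (ofVecLow n v) ≤ c := by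
  refine degX_le_of_forall_natDegree_coeff_le fun i => ?_
  rw [ofVecLow, finsetSum_coeff]
  refine natDegree_sum_le_of_forall_le _ _ fun j _ => ?_
  split_ifs
  · rw [coeff_C_mul_X_pow]
    split_ifs
    · exact hv j
    · simp
  · simp

theorem degX_ofVecHigh_le (n : ℕ) {c : ℕ} {v : Fin N → k[X]} (hv : ∀ j, (v j).natDegree ≤ c) :
    degX (ofVecHigh n v) ≤ c := by
  refine degX_le_of_forall_natDegree_coeff_le fun i => ?_
  rw [ofVecHigh, finsetSum_coeff]
  refine natDegree_sum_le_of_forall_le _ _ fun j _ => ?_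
  split_ifs
  · simp
  · rw [coeff_C_mul_X_pow]
    split_ifs
    · exact hv j
    · simp

end DegXOfVec

section HermiteMap

variable {R : Type*} [CommRing R]

/-- The map behind the Hermite matrix `H((Q*)²)`, where `Q⁻ = Q*`, written with `Q` for `Q*`. -/
def hermiteMap (Q A a : R[X]) : R[X] :=
  Q * derivative A - derivative Q * A + Q * a

theorem natDegree_hermiteMap_lt {Q A a : R[X]} (hA : A.natDegree < Q.natDegree)
    (ha : a.natDegree < Q.natDegree) : (hermiteMap Q A a).natDegree < 2 * Q.natDegree := by
  have hA' := natDegree_derivative_le A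
  have hQ' := natDegree_derivative_le Q
  refine Nat.lt_of_le_sub_one (by omega) ?_
  refine (natDegree_add_le _ _).trans (max_le ((natDegree_sub_le _ _).trans (max_le ?_ ?_)) ?_)
    <;> exact natDegree_mul_le.trans (by omega)

theorem eq_zero_of_hermiteMap_eq_zero [IsDomain R] [DecompositionMonoid R[X]] {Q A a : R[X]}
    (hQ : IsRelPrime Q (derivative Q)) (hA : A.natDegree < Q.natDegree)
    (h : hermiteMap Q A a = 0) : A = 0 ∧ a = 0 := by
  have hQ0 : Q ≠ 0 := by rintro rfl; simp at hA
  have hdvd : Q ∣ derivative Q * A :=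
    ⟨derivative A + a, by rw [hermiteMap] at h; linear_combination -h⟩
  have hA0 : A = 0 := by
    by_contra hA0
    exact (natDegree_le_of_dvd (hQ.dvd_of_dvd_mul_left hdvd) hA0).not_gt hA
  refine ⟨hA0, ?_⟩
  simpa [hermiteMap, hA0, hQ0] using h

end HermiteMap

section HermiteMatrix

variable {k : Type*} [Field k]

theorem hermiteMat_apply (Q : k[X][X]) (N n : ℕ) (i j : Fin N) :
    hermiteMat Q Q (derivative Q) N n i j =
      (if (j : ℕ) < n then hermiteMap Q (X ^ (j : ℕ)) 0
        else hermiteMap Q 0 (X ^ ((j : ℕ) - n))).coeff i := by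
  rw [hermiteMat, Matrix.of_apply]
  split_ifs <;> simp only [hermiteMap, derivative_zero, mul_zero, sub_zero, zero_add, add_zero]

theorem natDegree_coeff_mul_X_pow_le_degX (Q : k[X][X]) (m i : ℕ) :
    ((Q * X ^ m).coeff i).natDegree ≤ degX Q := by
  rw [coeff_mul_X_pow']
  split_ifs
  · exact natDegree_coeff_le_degX Q _
  · simp

theorem natDegree_hermiteMat_apply_le (Q : k[X][X]) (N n : ℕ) (i j : Fin N) :
    (hermiteMat Q Q (derivative Q) N n i j).natDegree ≤ degX Q := by
  rw [hermiteMat, Matrix.of_apply]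
  split_ifs
  · rw [coeff_sub, derivative_X_pow, mul_left_comm, coeff_C_mul]
    refine (natDegree_sub_le _ _).trans (max_le ?_ ?_)
    · exact natDegree_mul_le.trans
        (by simpa using natDegree_coeff_mul_X_pow_le_degX Q ((j : ℕ) - 1) i)
    · rw [coeff_mul_X_pow']
      split_ifs
      · exact natDegree_coeff_derivative_le_degX Q _
      · simp
  · exact natDegree_coeff_mul_X_pow_le_degX Q _ i

theorem natDegree_det_hermiteMat_le (Q : k[X][X]) (N n : ℕ) :
    (hermiteMat Q Q (derivative Q) N n).det.natDegree ≤ N * degX Q :=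
  (Matrix.natDegree_det_le_sum _ _ (natDegree_hermiteMat_apply_le Q N n)).trans_eq (by simp)

theorem hermiteMat_mulVec_apply (Q : k[X][X]) {N : ℕ} (n : ℕ) (v : Fin N → k[X]) (i : Fin N) :
    (hermiteMat Q Q (derivative Q) N n).mulVec v i =
      (hermiteMap Q (ofVecLow n v) (ofVecHigh n v)).coeff i := by
  have hsum : hermiteMap Q (ofVecLow n v) (ofVecHigh n v) = ∑ j : Fin N, C (v j) *
      (if (j : ℕ) < n then hermiteMap Q (X ^ (j : ℕ)) 0
        else hermiteMap Q 0 (X ^ ((j : ℕ) - n))) := by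
    simp only [hermiteMap, ofVecLow, ofVecHigh, derivative_sum, Finset.mul_sum,
      ← Finset.sum_sub_distrib, ← Finset.sum_add_distrib]
    refine Finset.sum_congr rfl fun j _ => ?_
    split_ifs
    · rw [derivative_C_mul]
      ring
    · simp only [derivative_zero, mul_zero]
      ring
  simp only [Matrix.mulVec, dotProduct, hermiteMat_apply, hsum, finsetSum_coeff, coeff_C_mul]
  exact Finset.sum_congr rfl fun j _ => mul_comm _ _

theorem hermiteMap_ofVec_eq_of_mulVec_eq {Q P : k[X][X]} {N : ℕ} (hN : N = 2 * Q.natDegree)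
    (hn : 0 < Q.natDegree) (hP : P.natDegree < N) {v : Fin N → k[X]}
    (h : ∀ i, (hermiteMat Q Q (derivative Q) N Q.natDegree).mulVec v i = P.coeff i) :
    hermiteMap Q (ofVecLow Q.natDegree v) (ofVecHigh Q.natDegree v) = P := by
  ext i : 1
  by_cases hi : i < N
  · simpa only [hermiteMat_mulVec_apply] using h ⟨i, hi⟩
  · have hlt := natDegree_hermiteMap_lt (natDegree_ofVecLow_lt hn v)
      (natDegree_ofVecHigh_lt hn hN.le v)
    rw [coeff_eq_zero_of_natDegree_lt (by omega), coeff_eq_zero_of_natDegree_lt (by omega)]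

theorem det_hermiteMat_ne_zero {Q : k[X][X]} (hQ : IsRelPrime Q (derivative Q)) {N : ℕ}
    (hN : N = 2 * Q.natDegree) (hn : 0 < Q.natDegree) :
    (hermiteMat Q Q (derivative Q) N Q.natDegree).det ≠ 0 := by
  intro hdet
  obtain ⟨v, hv0, hv⟩ := Matrix.exists_mulVec_eq_zero_iff.mpr hdet
  have h := hermiteMap_ofVec_eq_of_mulVec_eq hN hn (P := 0) (v := v) (by simp; omega)
    (fun i => by simp [hv])
  obtain ⟨hlow, hhigh⟩ := eq_zero_of_hermiteMap_eq_zero hQ (natDegree_ofVecLow_lt hn v) h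
  exact hv0 (eq_zero_of_ofVecLow_eq_zero_of_ofVecHigh_eq_zero hlow hhigh)

theorem exists_hermiteMap_eq_C_det_mul {Q P : k[X][X]} {N : ℕ} (hN : N = 2 * Q.natDegree)
    (hn : 0 < Q.natDegree) (hP : P.natDegree < N) :
    ∃ B b : k[X][X], B.degree < Q.natDegree ∧ b.degree < Q.natDegree ∧
      hermiteMap Q B b = C (hermiteMat Q Q (derivative Q) N Q.natDegree).det * P ∧
      degX B ≤ (N - 1) * degX Q + degX P ∧ degX b ≤ (N - 1) * degX Q + degX P := by
  set M := hermiteMat Q Q (derivative Q) N Q.natDegree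
  set w := M.cramer fun i => P.coeff i
  have hw : ∀ j, (w j).natDegree ≤ (N - 1) * degX Q + degX P := by
    simpa using M.natDegree_cramer_le _ (natDegree_hermiteMat_apply_le Q N _)
      (fun i => natDegree_coeff_le_degX P i)
  refine ⟨ofVecLow Q.natDegree w, ofVecHigh Q.natDegree w,
    degree_le_natDegree.trans_lt (by exact_mod_cast natDegree_ofVecLow_lt hn w),
    degree_le_natDegree.trans_lt (by exact_mod_cast natDegree_ofVecHigh_lt hn hN.le w),
    hermiteMap_ofVec_eq_of_mulVec_eq hN hn ((natDegree_C_mul_le _ _).trans_lt hP) fun i => ?_,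
    degX_ofVecLow_le _ hw, degX_ofVecHigh_le _ hw⟩
  rw [Matrix.mulVec_cramer, coeff_C_mul]
  rfl

end HermiteMatrix

theorem stmt_4_general {k : Type*} [Field k] [CharZero k]
    (P Q : Polynomial (Polynomial k))
    (hP : P ≠ 0) (hQ : Q ≠ 0)
    (hPQdeg : P.degree < Q.degree)
    (hQprimY : Q.IsPrimitive)
    (m : ℕ) (Qi : ℕ → Polynomial (Polynomial k))
    (hQisqf : ∀ i < m, Squarefree (Qi i))
    (hQicop : ∀ i < m, ∀ j < m, i ≠ j → IsRelPrime (Qi i) (Qi j))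
    (Qs : Polynomial (Polynomial k))
    (hQs : Qs = ∏ i ∈ Finset.range m, Qi i)
    (hQQ : Q = Qs ^ 2)
    (δ' : Polynomial k)
    (hδ' : δ' = (hermiteMat Qs Qs (Polynomial.derivative Qs)
      ((Qs ^ 2).natDegree) Qs.natDegree).det)
    (μ' : ℕ) (hμ' : μ' = 2 * degX Qs * Qs.natDegree)
    (Dy : RatFunc (RatFunc k) → RatFunc (RatFunc k)) (hDy : IsDeriv Dy)
    (hDyval : ∀ A : Polynomial (RatFunc k), Dy (kyToF A) = kyToF (Polynomial.derivative A)) :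
    δ' ≠ 0 ∧ δ'.natDegree ≤ μ' ∧
    ∃ B b : Polynomial (Polynomial k),
      B.degree < (Qs.natDegree : WithBot ℕ) ∧
      b.degree < (Qs.natDegree : WithBot ℕ) ∧
      toF P / toF Qs ^ 2 =
        Dy (toF B / (toF (Polynomial.C δ') * toF Qs)) +
          toF b / (toF (Polynomial.C δ') * toF Qs) ∧
      (degX B : ℤ) ≤ (μ' : ℤ) - degX Qs + degX P ∧
      (degX b : ℤ) ≤ (μ' : ℤ) - degX Qs + degX P := by
  subst hQQ
  have hQs0 : Qs ≠ 0 := by rintro rfl; simp at hQ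
  have hN : (Qs ^ 2).natDegree = 2 * Qs.natDegree := by rw [natDegree_pow]
  have hPN : P.natDegree < (Qs ^ 2).natDegree := natDegree_lt_natDegree hP hPQdeg
  have hn : 0 < Qs.natDegree := by omega
  have hsf : Squarefree Qs := hQs ▸ Finset.squarefree_prod_of_pairwise_isCoprime
    (fun i hi j hj hij => hQicop i (by simpa using hi) j (by simpa using hj) hij)
    (fun i hi => hQisqf i (by simpa using hi))
  have hcop : IsRelPrime Qs (derivative Qs) :=
    (isPrimitive_of_dvd hQprimY (dvd_pow_self Qs two_ne_zero)).isRelPrime_derivative hsf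
  have hδ0 : δ' ≠ 0 := hδ' ▸ det_hermiteMat_ne_zero hcop hN hn
  obtain ⟨B, b, hB, hb, hBb, hdegB, hdegb⟩ := exists_hermiteMap_eq_C_det_mul hN hn hPN
  have hμ : ((Qs ^ 2).natDegree - 1) * degX Qs + degX Qs = μ' := by
    rw [← Nat.succ_mul, Nat.succ_eq_add_one, Nat.sub_add_cancel (by omega), hN, hμ']
    ring
  refine ⟨hδ0, hδ' ▸ (natDegree_det_hermiteMat_le _ _ _).trans_eq (by rw [hN, hμ']; ring),
    B, b, hB, hb, ?_, by omega, by omega⟩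
  have hDyF := apply_toF_eq_toF_derivative hDyval
  have hF0 {R : k[X][X]} (hR : R ≠ 0) : toF R ≠ 0 := (map_ne_zero_iff _ toF_injective).mpr hR
  refine hDy.div_sq_eq_map_div_add_div (hF0 (C_ne_zero.mpr hδ0)) (hF0 hQs0)
    (by rw [hDyF, derivative_C, map_zero]) ?_
  rw [hDyF, hDyF, hδ']
  simpa only [hermiteMap, map_add, map_sub, map_mul] using congrArg toF hBb

/-- Corollary `cor:specialQ`. Assume Hypothesis (H) and `Q = (Q*)²`. With
`δ' = det H((Q*)²)` and `μ' = 2·d_x*·d_y*`: `δ'` is nonzero of degree at most `μ'`, and there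
exist `B, b ∈ k[x,y]` with `deg_y(B), deg_y(b) < d_y*`,
`P/(Q*)² = D_y(B/(δ'·Q*)) + b/(δ'·Q*)`, and `deg_x(B), deg_x(b) ≤ μ' − d_x* + deg_x(P)`. -/
theorem stmt_4 {k : Type*} [Field k] [CharZero k]
    (P Q : Polynomial (Polynomial k))
    (hP : P ≠ 0) (hQ : Q ≠ 0)
    (hPQdeg : P.degree < Q.degree)
    (hPQcop : IsRelPrime P Q)
    (hQprimY : Q.IsPrimitive)
    (m : ℕ) (hm : 0 < m) (q : Polynomial k) (Qi : ℕ → Polynomial (Polynomial k))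
    (hfac : Q = Polynomial.C q * ∏ i ∈ Finset.range m, Qi i ^ (i + 1))
    (hQiprim : ∀ i < m, (Qi i).IsPrimitive)
    (hQisqf : ∀ i < m, Squarefree (Qi i))
    (hQicop : ∀ i < m, ∀ j < m, i ≠ j → IsRelPrime (Qi i) (Qi j))
    (hQim : 0 < (Qi (m - 1)).natDegree)
    (Qs Qneg : Polynomial (Polynomial k))
    (hQs : Qs = ∏ i ∈ Finset.range m, Qi i)
    (hQneg : Q = Qs * Qneg)
    (hQQ : Q = Qs ^ 2)
    (δ' : Polynomial k)
    (hδ' : δ' = (hermiteMat Qs Qs (Polynomial.derivative Qs)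
      ((Qs ^ 2).natDegree) Qs.natDegree).det)
    (μ' : ℕ) (hμ' : μ' = 2 * degX Qs * Qs.natDegree)
    (Dy : RatFunc (RatFunc k) → RatFunc (RatFunc k)) (hDy : IsDeriv Dy)
    (hDyval : ∀ A : Polynomial (RatFunc k), Dy (kyToF A) = kyToF (Polynomial.derivative A)) :
    δ' ≠ 0 ∧ δ'.natDegree ≤ μ' ∧
    ∃ B b : Polynomial (Polynomial k),
      B.degree < (Qs.natDegree : WithBot ℕ) ∧
      b.degree < (Qs.natDegree : WithBot ℕ) ∧
      toF P / toF Qs ^ 2 =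
        Dy (toF B / (toF (Polynomial.C δ') * toF Qs)) +
          toF b / (toF (Polynomial.C δ') * toF Qs) ∧
      (degX B : ℤ) ≤ (μ' : ℤ) - degX Qs + degX P ∧
      (degX b : ℤ) ≤ (μ' : ℤ) - degX Qs + degX P :=
  stmt_4_general P Q hP hQ hPQdeg hQprimY m Qi hQisqf hQicop Qs hQs hQQ δ' hδ' μ' hμ' Dy hDy hDyval
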